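/- arXiv:2603.17137 — 4 statements merged into one kernel-verified Lean document; each statement's English description precedes it below -/
import Mathlib

section
/- Let v, w ∈ ℝ^m with w = Φ(v) the repeated ReLU (componentwise max with 0). Let Q₁, Q₂ ∈ ℝ^{m×m} be symmetric matrices with all entries nonnegative, and let Q₃ ∈ ℝ^{m×m} be a Metzler matrix (off-diagonal entries nonnegative). Then the quadratic form [v; w]ᵀ M [v; w] ≥ 0, where M is the 2m×2m block matrix with blocks M₁₁ = Q₁, M₁₂ = −Q₃ᵀ − Q₁, M₂₁ = −Q₃ − Q₁, M₂₂ = Q₁ + Q₂ + Q₃ + Q₃ᵀ. -/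
/-!
With `u = Φ(v) - v` the negative part of `v`, the form equals
`uᵀ Q₁ u + wᵀ Q₂ w + 2 wᵀ Q₃ u`. Both `u` and `w` are nonnegative and complementary
(`wᵢ uᵢ = 0`), so every term `wᵢ (Q₃)ᵢⱼ uⱼ` is nonnegative: off the diagonal because `Q₃` is
Metzler, on it because it vanishes.
-/

open Matrix

namespace Matrix

variable {n R : Type*} [Fintype n]

def IsMetzler [Zero R] [LE R] (A : Matrix n n R) : Prop :=
  ∀ i j, i ≠ j → 0 ≤ A i j

section OrderedSemiring

variable [CommSemiring R] [PartialOrder R] [IsOrderedRing R]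

theorem dotProduct_mulVec_nonneg_of_forall {x y : n → R} {A : Matrix n n R}
    (h : ∀ i j, 0 ≤ x i * A i j * y j) : 0 ≤ x ⬝ᵥ A *ᵥ y := by
  rw [dot_mulVec_eq_sum_sum]
  exact Finset.sum_nonneg fun j _ => Finset.sum_nonneg fun i _ => h i j

theorem dotProduct_mulVec_nonneg {A : Matrix n n R} (hA : ∀ i j, 0 ≤ A i j) {x y : n → R}
    (hx : 0 ≤ x) (hy : 0 ≤ y) : 0 ≤ x ⬝ᵥ A *ᵥ y :=
  dotProduct_mulVec_nonneg_of_forall fun i j => mul_nonneg (mul_nonneg (hx i) (hA i j)) (hy j)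

theorem IsMetzler.dotProduct_mulVec_nonneg {A : Matrix n n R} (hA : A.IsMetzler) {x y : n → R}
    (hx : 0 ≤ x) (hy : 0 ≤ y) (hxy : ∀ i, x i * y i = 0) : 0 ≤ x ⬝ᵥ A *ᵥ y := by
  refine dotProduct_mulVec_nonneg_of_forall fun i j => ?_
  rcases eq_or_ne i j with rfl | hij
  · rw [mul_right_comm, hxy, zero_mul]
  · exact mul_nonneg (mul_nonneg (hx i) (hA i j hij)) (hy j)

end OrderedSemiring

theorem blockQuadForm_eq [CommRing R] (v w : n → R) (Q₁ Q₂ Q₃ : Matrix n n R) :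
    v ⬝ᵥ (Q₁ *ᵥ v) + v ⬝ᵥ ((-Q₃ᵀ - Q₁) *ᵥ w) + w ⬝ᵥ ((-Q₃ - Q₁) *ᵥ v)
        + w ⬝ᵥ ((Q₁ + Q₂ + Q₃ + Q₃ᵀ) *ᵥ w) =
      (w - v) ⬝ᵥ Q₁ *ᵥ (w - v) + w ⬝ᵥ Q₂ *ᵥ w + 2 * (w ⬝ᵥ Q₃ *ᵥ (w - v)) := by
  simp only [sub_mulVec, add_mulVec, neg_mulVec, mulVec_sub, dotProduct_add, dotProduct_sub,
    sub_dotProduct, dotProduct_neg, dotProduct_transpose_mulVec]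
  ring

end Matrix

theorem max_zero_mul_max_zero_sub_self {α : Type*} [Ring α] [LinearOrder α] (a : α) :
    max a 0 * (max a 0 - a) = 0 := by
  rcases le_total a 0 with h | h <;> simp [h]

theorem repeated_relu_static_QC_general (m : ℕ) (v w : Fin m → ℝ)
    (hw : ∀ i, w i = max (v i) 0)
    (Q₁ Q₂ Q₃ : Matrix (Fin m) (Fin m) ℝ)
    (hQ₁n : ∀ i j, 0 ≤ Q₁ i j) (hQ₂n : ∀ i j, 0 ≤ Q₂ i j)
    (hQ₃ : ∀ i j, i ≠ j → 0 ≤ Q₃ i j) :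
    0 ≤ v ⬝ᵥ (Q₁ *ᵥ v) + v ⬝ᵥ ((-Q₃ᵀ - Q₁) *ᵥ w) + w ⬝ᵥ ((-Q₃ - Q₁) *ᵥ v)
        + w ⬝ᵥ ((Q₁ + Q₂ + Q₃ + Q₃ᵀ) *ᵥ w) := by
  have hw₀ : 0 ≤ w := fun i => hw i ▸ le_max_right _ _
  have hu₀ : 0 ≤ w - v := fun i => sub_nonneg.2 (hw i ▸ le_max_left _ _)
  have hwu : ∀ i, w i * (w - v) i = 0 := fun i => by
    rw [Pi.sub_apply, hw i]
    exact max_zero_mul_max_zero_sub_self (v i)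
  rw [blockQuadForm_eq]
  have h₁ := dotProduct_mulVec_nonneg hQ₁n hu₀ hu₀
  have h₂ := dotProduct_mulVec_nonneg hQ₂n hw₀ hw₀
  have h₃ := IsMetzler.dotProduct_mulVec_nonneg hQ₃ hw₀ hu₀ hwu
  linarith

/-- Static QC for the repeated ReLU (Lemma 4). -/
theorem repeated_relu_static_QC (m : ℕ) (v w : Fin m → ℝ)
    (hw : ∀ i, w i = max (v i) 0)
    (Q₁ Q₂ Q₃ : Matrix (Fin m) (Fin m) ℝ)
    (hQ₁s : Q₁ᵀ = Q₁) (hQ₂s : Q₂ᵀ = Q₂)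
    (hQ₁n : ∀ i j, 0 ≤ Q₁ i j) (hQ₂n : ∀ i j, 0 ≤ Q₂ i j)
    (hQ₃ : ∀ i j, i ≠ j → 0 ≤ Q₃ i j) :
    0 ≤ v ⬝ᵥ (Q₁ *ᵥ v) + v ⬝ᵥ ((-Q₃ᵀ - Q₁) *ᵥ w) + w ⬝ᵥ ((-Q₃ - Q₁) *ᵥ v)
        + w ⬝ᵥ ((Q₁ + Q₂ + Q₃ + Q₃ᵀ) *ᵥ w) :=
  repeated_relu_static_QC_general m v w hw Q₁ Q₂ Q₃ hQ₁n hQ₂n hQ₃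
end

section
/- Let v, w ∈ ℝ^m with w = Φ(v) the repeated ReLU, and let Q₃ ∈ ℝ^{m×m} be a Metzler matrix. Then wᵀ Q₃ (w − v) ≥ 0. -/
open Matrix

theorem posPart_mul_negPart_eq_zero {R : Type*} [Ring R] [LinearOrder R] [IsOrderedRing R]
    (a : R) : a⁺ * a⁻ = 0 := by
  rcases le_total a 0 with ha | ha
  · rw [posPart_eq_zero.2 ha, zero_mul]
  · rw [negPart_eq_zero.2 ha, mul_zero]

/-- Off the diagonal every term of `xᵀ Q y` is a product of nonnegative factors; on the
diagonal it is `Q i i * (x i * y i) = 0`, whatever the sign of `Q i i`. -/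
theorem dotProduct_mulVec_nonneg_of_metzler {n R : Type*} [Fintype n] [CommSemiring R]
    [PartialOrder R] [IsOrderedRing R] {Q : Matrix n n R} (hQ : ∀ i j, i ≠ j → 0 ≤ Q i j)
    {x y : n → R} (hx : 0 ≤ x) (hy : 0 ≤ y) (hxy : ∀ i, x i * y i = 0) :
    0 ≤ x ⬝ᵥ (Q *ᵥ y) := by
  simp only [dotProduct, mulVec, Finset.mul_sum]
  refine Finset.sum_nonneg fun i _ => Finset.sum_nonneg fun j _ => ?_
  rcases eq_or_ne i j with rfl | hij
  · rw [mul_left_comm, hxy, mul_zero]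
  · exact mul_nonneg (hx i) (mul_nonneg (hQ i j hij) (hy j))

/-- wᵀ Q₃ (w - v) ≥ 0 for the repeated ReLU and a Metzler matrix Q₃. -/
theorem repeated_relu_Metzler_QC (m : ℕ) (v w : Fin m → ℝ)
    (hw : ∀ i, w i = max (v i) 0)
    (Q₃ : Matrix (Fin m) (Fin m) ℝ)
    (hQ₃ : ∀ i j, i ≠ j → 0 ≤ Q₃ i j) :
    0 ≤ w ⬝ᵥ (Q₃ *ᵥ (w - v)) := by
  have hw_pos : w = v⁺ := funext hw
  have hwv_neg : w - v = v⁻ := by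
    rw [hw_pos]
    nth_rewrite 2 [← posPart_sub_negPart v]
    exact sub_sub_cancel _ _
  rw [hwv_neg, hw_pos]
  exact dotProduct_mulVec_nonneg_of_metzler hQ₃ (posPart_nonneg v) (negPart_nonneg v)
    fun i => posPart_mul_negPart_eq_zero (v i)
end

section
/- Let {Qᵢ}_{i=−N}^{N} ⊂ ℝ^{m×m} satisfy: (i) all entries of Qᵢ are nonpositive for i ≠ 0; (ii) all off-diagonal entries of Q₀ are nonpositive; (iii) each row sum of the horizontal concatenation [Q₋N, …, Q₋₁, Q₀, Q₁, …, Q_N] is nonnegative; (iv) each column sum of the vertical concatenation [Q₋Nᵀ; …; Q₀ᵀ; …; Q_Nᵀ]ᵀ is nonnegative. Then for every T₀ ≥ 0, the block-Toeplitz matrix Q̄_{T₀} ∈ ℝ^{(T₀+1)m×(T₀+1)m} whose (j,k) block is Q_{k−j} if |k−j| ≤ N and 0 otherwise, is doubly hyperdominant. -/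
/-!
Each row (column) sum of the block-Toeplitz matrix is the row (column) sum of the
concatenation `[Q₋N, …, Q_N]` with the blocks that fall outside the matrix removed. The block
`Q₀` is never removed (it sits on the diagonal), and every removed block has nonpositive
entries, so removing it can only increase the sum.
-/

open Finset

section Window

variable {R : Type*} [AddCommMonoid R] [PartialOrder R] [IsOrderedAddMonoid R]

theorem sum_ite_natAbs_le_nonneg_of_injective {ι : Type*} [Fintype ι] (N : ℕ) {g : ℤ → R}
    (hg : ∀ i : ℤ, i ≠ 0 → i.natAbs ≤ N → g i ≤ 0)
    (hsum : 0 ≤ ∑ i ∈ Icc (-(N : ℤ)) N, g i)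
    {φ : ι → ℤ} (hφ : Function.Injective φ) (h0 : 0 ∈ Set.range φ) :
    0 ≤ ∑ k, if (φ k).natAbs ≤ N then g (φ k) else 0 := by
  classical
  set S := {i ∈ univ.image φ | i.natAbs ≤ N}
  have hS : S ⊆ Icc (-(N : ℤ)) N := fun i hi => by
    simp only [S, mem_filter, mem_Icc] at hi ⊢
    omega
  have hdropped : ∀ i ∈ Icc (-(N : ℤ)) N, i ∉ S → g i ≤ 0 := by
    intro i hi hiS
    obtain ⟨k, hk⟩ := h0
    refine hg i (fun hi0 => hiS ?_) (by simp only [mem_Icc] at hi; omega)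
    simp only [S, mem_filter, mem_image, mem_univ, true_and]
    exact ⟨⟨k, hk.trans hi0.symm⟩, by simp [hi0]⟩
  calc 0 ≤ ∑ i ∈ Icc (-(N : ℤ)) N, g i := hsum
    _ ≤ ∑ i ∈ S, g i := sum_le_sum_of_subset_of_nonpos' hS hdropped
    _ = ∑ k, if (φ k).natAbs ≤ N then g (φ k) else 0 := by
      rw [sum_filter, sum_image hφ.injOn]

end Window

section BlockToeplitz

variable {R : Type*} [AddCommMonoid R] [PartialOrder R] {ι : Type*}

def IsDoublyHyperdominant {κ : Type*} [Fintype κ] (M : Matrix κ κ R) : Prop :=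
  (∀ p q, p ≠ q → M p q ≤ 0) ∧ (∀ p, 0 ≤ ∑ q, M p q) ∧ (∀ q, 0 ≤ ∑ p, M p q)

def blockToeplitz (N : ℕ) (Q : ℤ → Matrix ι ι R) (n : ℕ) :
    Matrix (Fin n × ι) (Fin n × ι) R :=
  fun p q => if ((q.1 : ℤ) - p.1).natAbs ≤ N then Q ((q.1 : ℤ) - p.1) p.2 q.2 else 0

variable {N : ℕ} {Q : ℤ → Matrix ι ι R} {n : ℕ}

theorem blockToeplitz_apply_nonpos_of_ne
    (hoff : ∀ i : ℤ, i ≠ 0 → i.natAbs ≤ N → ∀ a b, Q i a b ≤ 0)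
    (hdiag : ∀ a b : ι, a ≠ b → Q 0 a b ≤ 0) {p q : Fin n × ι} (hpq : p ≠ q) :
    blockToeplitz N Q n p q ≤ 0 := by
  unfold blockToeplitz
  split_ifs with hN
  · by_cases hblock : p.1 = q.1
    · rw [hblock, sub_self]
      exact hdiag _ _ fun h => hpq (Prod.ext hblock h)
    · exact hoff _ (sub_ne_zero.2 (by exact_mod_cast Fin.val_injective.ne (Ne.symm hblock))) hN _ _
  · rfl

variable [IsOrderedAddMonoid R] [Fintype ι]

theorem sum_blockToeplitz_row_nonneg
    (hoff : ∀ i : ℤ, i ≠ 0 → i.natAbs ≤ N → ∀ a b, Q i a b ≤ 0)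
    (hrow : ∀ a : ι, 0 ≤ ∑ i ∈ Icc (-(N : ℤ)) N, ∑ b, Q i a b) (p : Fin n × ι) :
    0 ≤ ∑ q, blockToeplitz N Q n p q := by
  have := sum_ite_natAbs_le_nonneg_of_injective N
    (fun i hi hiN => sum_nonpos fun b _ => hoff i hi hiN p.2 b) (hrow p.2)
    (φ := fun k : Fin n => (k : ℤ) - p.1)
    ((sub_left_injective.comp Nat.cast_injective).comp Fin.val_injective) ⟨p.1, sub_self _⟩
  simpa only [Fintype.sum_prod_type, blockToeplitz, ite_sum_zero] using this

theorem sum_blockToeplitz_col_nonneg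
    (hoff : ∀ i : ℤ, i ≠ 0 → i.natAbs ≤ N → ∀ a b, Q i a b ≤ 0)
    (hcol : ∀ b : ι, 0 ≤ ∑ i ∈ Icc (-(N : ℤ)) N, ∑ a, Q i a b) (q : Fin n × ι) :
    0 ≤ ∑ p, blockToeplitz N Q n p q := by
  have := sum_ite_natAbs_le_nonneg_of_injective N
    (fun i hi hiN => sum_nonpos fun a _ => hoff i hi hiN a q.2) (hcol q.2)
    (φ := fun k : Fin n => (q.1 : ℤ) - k)
    ((sub_right_injective.comp Nat.cast_injective).comp Fin.val_injective) ⟨q.1, sub_self _⟩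
  simpa only [Fintype.sum_prod_type, blockToeplitz, ite_sum_zero] using this

theorem isDoublyHyperdominant_blockToeplitz
    (hoff : ∀ i : ℤ, i ≠ 0 → i.natAbs ≤ N → ∀ a b, Q i a b ≤ 0)
    (hdiag : ∀ a b : ι, a ≠ b → Q 0 a b ≤ 0)
    (hrow : ∀ a : ι, 0 ≤ ∑ i ∈ Icc (-(N : ℤ)) N, ∑ b, Q i a b)
    (hcol : ∀ b : ι, 0 ≤ ∑ i ∈ Icc (-(N : ℤ)) N, ∑ a, Q i a b) :
    IsDoublyHyperdominant (blockToeplitz N Q n) :=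
  ⟨fun _ _ => blockToeplitz_apply_nonpos_of_ne hoff hdiag, sum_blockToeplitz_row_nonneg hoff hrow,
    sum_blockToeplitz_col_nonneg hoff hcol⟩

end BlockToeplitz

/-- The block-Toeplitz matrix built from matrices {Qᵢ} satisfying the
sign and row/column sum conditions is doubly hyperdominant. -/
theorem blockToeplitz_doubly_hyperdominant (m N : ℕ)
    (Q : ℤ → Matrix (Fin m) (Fin m) ℝ)
    (h1 : ∀ i : ℤ, i ≠ 0 → i.natAbs ≤ N → ∀ a b, Q i a b ≤ 0)
    (h2 : ∀ a b : Fin m, a ≠ b → Q 0 a b ≤ 0)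
    (h3 : ∀ a : Fin m, 0 ≤ ∑ i ∈ Finset.Icc (-(N : ℤ)) N, ∑ b, Q i a b)
    (h4 : ∀ b : Fin m, 0 ≤ ∑ i ∈ Finset.Icc (-(N : ℤ)) N, ∑ a, Q i a b)
    (T₀ : ℕ)
    (Qbar : Matrix (Fin (T₀ + 1) × Fin m) (Fin (T₀ + 1) × Fin m) ℝ)
    (hQbar : ∀ p q, Qbar p q =
      if ((q.1.val : ℤ) - (p.1.val : ℤ)).natAbs ≤ N then
        Q ((q.1.val : ℤ) - (p.1.val : ℤ)) p.2 q.2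
      else 0) :
    (∀ p q, p ≠ q → Qbar p q ≤ 0) ∧
    (∀ p, 0 ≤ ∑ q, Qbar p q) ∧
    (∀ q, 0 ≤ ∑ p, Qbar p q) := by
  obtain rfl : Qbar = blockToeplitz N Q (T₀ + 1) := Matrix.ext hQbar
  exact isDoublyHyperdominant_blockToeplitz h1 h2 h3 h4
end

section
/- (Dynamic IQC for repeated ReLU, finite-sum form.) Let Φ : ℝ^m → ℝ^m be the repeated ReLU, and let v : ℕ → ℝ^m be any sequence with w(k) = Φ(v(k)), with the convention v(j) = w(j) = 0 for j < 0. Let {Qᵢ¹}_{i=0}^N, {Qᵢ²}_{i=0}^N be symmetric entrywise-nonnegative m×m matrices and {Qᵢ³}_{i=−N}^N be m×m matrices with Qᵢ³ entrywise nonnegative for i ≠ 0 and Q₀³ Metzler. Define the block-Toeplitz matrices Q̄¹, Q̄², Q̄³ ∈ ℝ^{(T₀+1)m×(T₀+1)m} (blocks Q¹_{|k−j|}, Q²_{|k−j|}, Q³_{k−j} respectively, zero for |k−j| > N). Then for every T₀ ≥ 0, with v̄ and w̄ the stacked vectors of v(T₀),…,v(0) and w(T₀),…,w(0): v̄ᵀQ̄¹v̄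 − v̄ᵀ(Q̄³ᵀ + Q̄¹)w̄ − w̄ᵀ(Q̄³ + Q̄¹)v̄ + w̄ᵀ(Q̄¹ + Q̄² + Q̄³ + Q̄³ᵀ)w̄ ≥ 0. -/
/-!
With `y = max x 0` coordinatewise, the quadratic form equals
`∑ p q, A p q (x p - y p)(x q - y q) + B p q y p y q + 2 C p q y p (y q - x q)`.
Since `x - y ≤ 0`, `y ≥ 0` and `y p (y p - x p) = 0`, every summand is nonnegative as soon as
`A, B ≥ 0` entrywise and `C` is Metzler: complementarity kills the diagonal of `C`.
For the stacked vectors this applies with `A, B, C = Q̄¹, Q̄², Q̄³`; the block-Toeplitz structure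
only matters through the sign pattern it inherits from the blocks.
-/

open Matrix Finset

lemma max_zero_mul_sub_self (t : ℝ) : max t 0 * (max t 0 - t) = 0 := by
  rcases le_total t 0 with h | h
  · rw [max_eq_right h]; ring
  · rw [max_eq_left h]; ring

section QuadraticForm

variable {ι : Type*} [Fintype ι]

lemma quadratic_form_eq_sum (x y : ι → ℝ) (A B C : Matrix ι ι ℝ) :
    x ⬝ᵥ (A *ᵥ x) - x ⬝ᵥ ((Cᵀ + A) *ᵥ y) - y ⬝ᵥ ((C + A) *ᵥ x)
        + y ⬝ᵥ ((A + B + C + Cᵀ) *ᵥ y)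
      = ∑ p, ∑ q, (A p q * ((x p - y p) * (x q - y q))
        + B p q * (y p * y q) + 2 * C p q * (y p * (y q - x q))) := by
  have transpose_form : ∀ u : ι → ℝ, u ⬝ᵥ (Cᵀ *ᵥ y) = y ⬝ᵥ (C *ᵥ u) := fun u => by
    rw [dotProduct_mulVec, vecMul_transpose, dotProduct_comm]
  simp only [add_mulVec, dotProduct_add, transpose_form]
  simp only [dotProduct, mulVec, mul_sum, ← sum_sub_distrib, ← sum_add_distrib]
  exact sum_congr rfl fun p _ => sum_congr rfl fun q _ => by ring

theorem relu_quadratic_form_nonneg (x y : ι → ℝ) (hy : ∀ p, y p = max (x p) 0)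
    (A B C : Matrix ι ι ℝ) (hA : ∀ p q, 0 ≤ A p q) (hB : ∀ p q, 0 ≤ B p q)
    (hC : ∀ p q, p ≠ q → 0 ≤ C p q) :
    0 ≤ x ⬝ᵥ (A *ᵥ x) - x ⬝ᵥ ((Cᵀ + A) *ᵥ y) - y ⬝ᵥ ((C + A) *ᵥ x)
        + y ⬝ᵥ ((A + B + C + Cᵀ) *ᵥ y) := by
  have y_nonneg : ∀ p, 0 ≤ y p := fun p => hy p ▸ le_max_right _ _
  have x_sub_y_nonpos : ∀ p, x p - y p ≤ 0 := fun p => by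
    rw [hy p]; exact sub_nonpos.mpr (le_max_left _ _)
  rw [quadratic_form_eq_sum]
  refine sum_nonneg fun p _ => sum_nonneg fun q _ => add_nonneg (add_nonneg ?_ ?_) ?_
  · exact mul_nonneg (hA p q)
      (mul_nonneg_of_nonpos_of_nonpos (x_sub_y_nonpos p) (x_sub_y_nonpos q))
  · exact mul_nonneg (hB p q) (mul_nonneg (y_nonneg p) (y_nonneg q))
  · obtain rfl | hpq := eq_or_ne p q
    · rw [hy p, max_zero_mul_sub_self, mul_zero]
    · exact mul_nonneg (mul_nonneg zero_le_two (hC p q hpq))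
        (mul_nonneg (y_nonneg p) (by linarith [x_sub_y_nonpos q]))

end QuadraticForm

theorem repeated_relu_dynamic_IQC_general (m N : ℕ)
    (v w : ℕ → Fin m → ℝ)
    (hw : ∀ k i, w k i = max (v k i) 0)
    (Q1 Q2 : ℕ → Matrix (Fin m) (Fin m) ℝ)
    (hQ1n : ∀ i, i ≤ N → ∀ a b, 0 ≤ Q1 i a b)
    (hQ2n : ∀ i, i ≤ N → ∀ a b, 0 ≤ Q2 i a b)
    (Q3 : ℤ → Matrix (Fin m) (Fin m) ℝ)
    (hQ3n : ∀ i : ℤ, i ≠ 0 → i.natAbs ≤ N → ∀ a b, 0 ≤ Q3 i a b)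
    (hQ3M : ∀ a b : Fin m, a ≠ b → 0 ≤ Q3 0 a b)
    (T₀ : ℕ)
    (Qbar1 Qbar2 Qbar3 : Matrix (Fin (T₀ + 1) × Fin m) (Fin (T₀ + 1) × Fin m) ℝ)
    (hQbar1 : ∀ p q, Qbar1 p q =
      if ((q.1.val : ℤ) - (p.1.val : ℤ)).natAbs ≤ N then
        Q1 (((q.1.val : ℤ) - (p.1.val : ℤ)).natAbs) p.2 q.2 else 0)
    (hQbar2 : ∀ p q, Qbar2 p q =
      if ((q.1.val : ℤ) - (p.1.val : ℤ)).natAbs ≤ N then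
        Q2 (((q.1.val : ℤ) - (p.1.val : ℤ)).natAbs) p.2 q.2 else 0)
    (hQbar3 : ∀ p q, Qbar3 p q =
      if ((q.1.val : ℤ) - (p.1.val : ℤ)).natAbs ≤ N then
        Q3 ((q.1.val : ℤ) - (p.1.val : ℤ)) p.2 q.2 else 0)
    (vbar wbar : Fin (T₀ + 1) × Fin m → ℝ)
    (hvbar : ∀ p, vbar p = v (T₀ - p.1.val) p.2)
    (hwbar : ∀ p, wbar p = w (T₀ - p.1.val) p.2) :
    0 ≤ vbar ⬝ᵥ (Qbar1 *ᵥ vbar) - vbar ⬝ᵥ ((Qbar3ᵀ + Qbar1) *ᵥ wbar)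
        - wbar ⬝ᵥ ((Qbar3 + Qbar1) *ᵥ vbar)
        + wbar ⬝ᵥ ((Qbar1 + Qbar2 + Qbar3 + Qbar3ᵀ) *ᵥ wbar) := by
  refine relu_quadratic_form_nonneg vbar wbar (fun p => by rw [hwbar, hvbar, hw])
    Qbar1 Qbar2 Qbar3 (fun p q => ?_) (fun p q => ?_) (fun p q hpq => ?_)
  · rw [hQbar1]; split_ifs with h
    exacts [hQ1n _ h _ _, le_rfl]
  · rw [hQbar2]; split_ifs with h
    exacts [hQ2n _ h _ _, le_rfl]
  · rw [hQbar3]; split_ifs with h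
    · obtain hlag | hlag := eq_or_ne ((q.1.val : ℤ) - (p.1.val : ℤ)) 0
      · have same_time : p.1 = q.1 := Fin.ext (by omega)
        rw [hlag]
        exact hQ3M _ _ fun h2 => hpq (Prod.ext same_time h2)
      · exact hQ3n _ hlag h _ _
    · exact le_rfl

/-- Dynamic IQC for the repeated ReLU, finite-sum (stacked) form
(Lemma 5). -/
theorem repeated_relu_dynamic_IQC (m N : ℕ)
    (v w : ℕ → Fin m → ℝ)
    (hw : ∀ k i, w k i = max (v k i) 0)
    (Q1 Q2 : ℕ → Matrix (Fin m) (Fin m) ℝ)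
    (hQ1s : ∀ i, i ≤ N → (Q1 i)ᵀ = Q1 i)
    (hQ2s : ∀ i, i ≤ N → (Q2 i)ᵀ = Q2 i)
    (hQ1n : ∀ i, i ≤ N → ∀ a b, 0 ≤ Q1 i a b)
    (hQ2n : ∀ i, i ≤ N → ∀ a b, 0 ≤ Q2 i a b)
    (Q3 : ℤ → Matrix (Fin m) (Fin m) ℝ)
    (hQ3n : ∀ i : ℤ, i ≠ 0 → i.natAbs ≤ N → ∀ a b, 0 ≤ Q3 i a b)
    (hQ3M : ∀ a b : Fin m, a ≠ b → 0 ≤ Q3 0 a b)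
    (T₀ : ℕ)
    (Qbar1 Qbar2 Qbar3 : Matrix (Fin (T₀ + 1) × Fin m) (Fin (T₀ + 1) × Fin m) ℝ)
    (hQbar1 : ∀ p q, Qbar1 p q =
      if ((q.1.val : ℤ) - (p.1.val : ℤ)).natAbs ≤ N then
        Q1 (((q.1.val : ℤ) - (p.1.val : ℤ)).natAbs) p.2 q.2 else 0)
    (hQbar2 : ∀ p q, Qbar2 p q =
      if ((q.1.val : ℤ) - (p.1.val : ℤ)).natAbs ≤ N then
        Q2 (((q.1.val : ℤ) - (p.1.val : ℤ)).natAbs) p.2 q.2 else 0)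
    (hQbar3 : ∀ p q, Qbar3 p q =
      if ((q.1.val : ℤ) - (p.1.val : ℤ)).natAbs ≤ N then
        Q3 ((q.1.val : ℤ) - (p.1.val : ℤ)) p.2 q.2 else 0)
    (vbar wbar : Fin (T₀ + 1) × Fin m → ℝ)
    (hvbar : ∀ p, vbar p = v (T₀ - p.1.val) p.2)
    (hwbar : ∀ p, wbar p = w (T₀ - p.1.val) p.2) :
    0 ≤ vbar ⬝ᵥ (Qbar1 *ᵥ vbar) - vbar ⬝ᵥ ((Qbar3ᵀ + Qbar1) *ᵥ wbar)
        - wbar ⬝ᵥ ((Qbar3 + Qbar1) *ᵥ vbar)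
        + wbar ⬝ᵥ ((Qbar1 + Qbar2 + Qbar3 + Qbar3ᵀ) *ᵥ wbar) :=
  repeated_relu_dynamic_IQC_general m N v w hw Q1 Q2 hQ1n hQ2n Q3 hQ3n hQ3M T₀ Qbar1 Qbar2 Qbar3
    hQbar1 hQbar2 hQbar3 vbar wbar hvbar hwbar
end
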